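/- arXiv:2002.07001 — 2 statements merged into one kernel-verified Lean document; each statement's English description precedes it below -/
import Mathlib

section
/- Let η(x) = (1+|x|^2)^ν with 0 < ν < α/2, 1 < α < 2, d ≥ 3. Let θ_n(s) = n θ(s/n) be truncations with θ ∈ C^2((0,∞)), θ(s) = s for 0 < s < 1, θ(s) = 2 for s > 2, and set η_n := θ_n(η). Then there is a constant C_0 < ∞, independent of n, such that |Δ η_n(x)| ≤ C_0 (1+|x|^2)^{ν-1} for all x ∈ ℝ^d. -/
/-!
`η_n(x) = g(‖x‖²)` with `g(t) = n θ((1+t)^ν / n)` is radial, so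
`Δη_n(x) = 2d g'(‖x‖²) + 4‖x‖² g''(‖x‖²)`. Writing `u = (1+t)^ν / n`,
`g'(t) = ν θ'(u) (1+t)^(ν-1)` and `g''(t) = ν (1+t)^(ν-2) (ν u θ''(u) + (ν-1) θ'(u))`.
The `1/n` coming from `θ_n''` is absorbed into `u θ''(u)`, which is bounded independently of
`n` because `θ''` vanishes off `[1, 2]`; together with `t (1+t)^(ν-2) ≤ (1+t)^(ν-1)` this gives
the bound.
-/

open MeasureTheory

noncomputable section

/-- The Laplacian of `f : ℝ^d → ℝ`, `Δf(x) = ∑ i ∂²_i f(x)`. -/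
def lap (d : ℕ) (f : EuclideanSpace ℝ (Fin d) → ℝ) (x : EuclideanSpace ℝ (Fin d)) : ℝ :=
  ∑ i : Fin d,
    fderiv ℝ (fun y => fderiv ℝ f y (EuclideanSpace.single i (1 : ℝ))) x
      (EuclideanSpace.single i (1 : ℝ))

open Set

theorem lap_comp_norm_sq {d : ℕ} {g g' g'' : ℝ → ℝ}
    (hg : ∀ t, 0 ≤ t → HasDerivAt g (g' t) t) (hg' : ∀ t, 0 ≤ t → HasDerivAt g' (g'' t) t)
    (x : EuclideanSpace ℝ (Fin d)) :
    lap d (fun y => g (‖y‖ ^ 2)) x = 2 * d * g' (‖x‖ ^ 2) + 4 * ‖x‖ ^ 2 * g'' (‖x‖ ^ 2) := by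
  have hcomp : ∀ {f f' : ℝ → ℝ}, (∀ t, 0 ≤ t → HasDerivAt f (f' t) t) →
      ∀ y : EuclideanSpace ℝ (Fin d),
        HasFDerivAt (fun y => f (‖y‖ ^ 2)) (f' (‖y‖ ^ 2) • (2 • innerSL ℝ y)) y :=
    fun hf y => (hf _ (by positivity)).comp_hasFDerivAt y (hasStrictFDerivAt_norm_sq y).hasFDerivAt
  have hpartial : ∀ i (y : EuclideanSpace ℝ (Fin d)),
      fderiv ℝ (fun y => g (‖y‖ ^ 2)) y (EuclideanSpace.single i 1) = g' (‖y‖ ^ 2) * (2 * y i) := by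
    intro i y
    rw [(hcomp hg y).fderiv]
    simp [EuclideanSpace.inner_single_right]
  have hsecond : ∀ i, fderiv ℝ (fun y => g' (‖y‖ ^ 2) * (2 * y i)) x (EuclideanSpace.single i 1)
      = 2 * g' (‖x‖ ^ 2) + 4 * g'' (‖x‖ ^ 2) * x i ^ 2 := by
    intro i
    have hcoord : HasFDerivAt (fun y : EuclideanSpace ℝ (Fin d) => 2 * y i)
        ((2 : ℝ) • (EuclideanSpace.proj i : EuclideanSpace ℝ (Fin d) →L[ℝ] ℝ)) x :=
      (EuclideanSpace.proj i : EuclideanSpace ℝ (Fin d) →L[ℝ] ℝ).hasFDerivAt.const_mul (2 : ℝ)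
    rw [((hcomp hg' x).fun_mul hcoord).fderiv]
    simp [EuclideanSpace.inner_single_right]
    ring
  unfold lap
  simp_rw [hpartial, hsecond, Finset.sum_add_distrib, ← Finset.mul_sum, EuclideanSpace.norm_sq_eq]
  simp
  ring

theorem hasDerivAt_one_add_rpow {t : ℝ} (p : ℝ) (ht : 0 < 1 + t) :
    HasDerivAt (fun t : ℝ => (1 + t) ^ p) (p * (1 + t) ^ (p - 1)) t := by
  simpa using ((hasDerivAt_id t).const_add 1).rpow_const (p := p) (Or.inl ht.ne')

section TruncatedProfile

variable {θ : ℝ → ℝ} {ν N t : ℝ}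

theorem hasDerivAt_truncProfile (hN : N ≠ 0) (ht : 0 < 1 + t)
    (hθ : DifferentiableAt ℝ θ ((1 + t) ^ ν / N)) :
    HasDerivAt (fun t => N * θ ((1 + t) ^ ν / N))
      (ν * deriv θ ((1 + t) ^ ν / N) * (1 + t) ^ (ν - 1)) t := by
  have hu := (hasDerivAt_one_add_rpow ν ht).div_const N
  refine ((hθ.hasDerivAt.comp t hu).const_mul N).congr_deriv ?_
  field_simp

theorem hasDerivAt_truncProfile_deriv (hN : N ≠ 0) (ht : 0 < 1 + t)
    (hθ' : DifferentiableAt ℝ (deriv θ) ((1 + t) ^ ν / N)) :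
    HasDerivAt (fun t => ν * deriv θ ((1 + t) ^ ν / N) * (1 + t) ^ (ν - 1))
      (ν * (1 + t) ^ (ν - 2) * (ν * ((1 + t) ^ ν / N * deriv (deriv θ) ((1 + t) ^ ν / N))
        + (ν - 1) * deriv θ ((1 + t) ^ ν / N))) t := by
  have hu := (hasDerivAt_one_add_rpow ν ht).div_const N
  have h := ((hθ'.hasDerivAt.comp t hu).fun_mul (hasDerivAt_one_add_rpow (ν - 1) ht)).const_mul ν
  simp only [Function.comp_apply] at h
  have hpow : (1 + t) ^ (ν - 1) * (1 + t) ^ (ν - 1) = (1 + t) ^ ν * (1 + t) ^ (ν - 2) := by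
    rw [← Real.rpow_add ht, ← Real.rpow_add ht]
    ring_nf
  refine (h.congr_of_eventuallyEq (.of_forall fun s => by ring)).congr_deriv ?_
  rw [show ν - 1 - 1 = ν - 2 by ring]
  field_simp
  linear_combination ν ^ 2 * deriv (deriv θ) ((1 + t) ^ ν / N) * hpow

end TruncatedProfile

theorem abs_radial_lap_le {d ν t a b c : ℝ} (hd : 0 ≤ d) (ht : 0 ≤ t) (ha : |a| ≤ c)
    (hb : |b| ≤ c) :
    |2 * d * (ν * a * (1 + t) ^ (ν - 1)) + 4 * t * (ν * (1 + t) ^ (ν - 2) * (ν * b + (ν - 1) * a))|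
      ≤ (2 * d * |ν| + 4 * |ν| * (|ν| + |ν - 1|)) * c * (1 + t) ^ (ν - 1) := by
  have hs : 0 < 1 + t := by linarith
  have hdecay : t * (1 + t) ^ (ν - 2) ≤ (1 + t) ^ (ν - 1) := by
    rw [show ν - 1 = ν - 2 + 1 by ring, Real.rpow_add_one hs.ne', mul_comm]
    gcongr
    linarith
  have hinner : |ν * b + (ν - 1) * a| ≤ (|ν| + |ν - 1|) * c := by
    calc |ν * b + (ν - 1) * a| ≤ |ν| * |b| + |ν - 1| * |a| := by
          simpa only [abs_mul] using abs_add_le (ν * b) ((ν - 1) * a)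
      _ ≤ |ν| * c + |ν - 1| * c := by gcongr
      _ = (|ν| + |ν - 1|) * c := by ring
  calc _ ≤ 2 * d * (|ν| * |a| * (1 + t) ^ (ν - 1))
        + 4 * (t * (1 + t) ^ (ν - 2)) * |ν| * |ν * b + (ν - 1) * a| := by
        refine (abs_add_le _ _).trans (le_of_eq ?_)
        simp only [abs_mul, abs_of_nonneg hd, abs_of_nonneg ht,
          abs_of_pos (Real.rpow_pos_of_pos hs _), abs_two, abs_of_pos (four_pos : (0 : ℝ) < 4)]
        ring
    _ ≤ 2 * d * (|ν| * c * (1 + t) ^ (ν - 1))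
        + 4 * (1 + t) ^ (ν - 1) * |ν| * ((|ν| + |ν - 1|) * c) := by gcongr
    _ = _ := by ring

theorem exists_forall_abs_le_of_continuousOn_Icc {f : ℝ → ℝ} {s : Set ℝ} {a b B : ℝ}
    (hf : ContinuousOn f (Icc a b)) (hout : ∀ u ∈ s \ Icc a b, |f u| ≤ B) :
    ∃ c, ∀ u ∈ s, |f u| ≤ c := by
  obtain ⟨c, hc⟩ := isCompact_Icc.exists_bound_of_continuousOn hf
  refine ⟨max c B, fun u hu => ?_⟩
  by_cases h : u ∈ Icc a b
  · exact (hc u h).trans (le_max_left _ _)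
  · exact (hout u ⟨hu, h⟩).trans (le_max_right _ _)

theorem exists_bound_deriv_of_truncation {θ : ℝ → ℝ} (hθC2 : ContDiffOn ℝ 2 θ (Ioi 0))
    (hθ1 : ∀ s : ℝ, 0 < s → s < 1 → θ s = s) (hθ2 : ∀ s : ℝ, 2 < s → θ s = 2) :
    ∃ c, ∀ u, 0 < u → |deriv θ u| ≤ c ∧ |u * deriv (deriv θ) u| ≤ c := by
  have hθ' : ContDiffOn ℝ 1 (deriv θ) (Ioi 0) := hθC2.deriv_of_isOpen isOpen_Ioi (by norm_num)
  have hθ'' : ContinuousOn (deriv (deriv θ)) (Ioi 0) :=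
    (hθ'.deriv_of_isOpen (m := 0) isOpen_Ioi (by norm_num)).continuousOn
  have hlo : EqOn (deriv θ) 1 (Ioo 0 1) := fun u hu => by
    rw [EqOn.deriv (g := id) (fun u hu => hθ1 u hu.1 hu.2) isOpen_Ioo hu]
    simp
  have hlo' : EqOn (deriv (deriv θ)) 0 (Ioo 0 1) := fun u hu => by
    rw [hlo.deriv isOpen_Ioo hu]
    simp
  have hhi : EqOn (deriv θ) 0 (Ioi 2) := fun u hu => by
    rw [EqOn.deriv (g := fun _ => 2) (fun u hu => hθ2 u hu) isOpen_Ioi hu]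
    simp
  have hhi' : EqOn (deriv (deriv θ)) 0 (Ioi 2) := fun u hu => by
    rw [hhi.deriv isOpen_Ioi hu]
    simp
  have hIcc : Icc (1 : ℝ) 2 ⊆ Ioi 0 := fun u hu => one_pos.trans_le hu.1
  have hout : ∀ u ∈ Ioi (0 : ℝ) \ Icc 1 2, u ∈ Ioo 0 1 ∨ u ∈ Ioi 2 := by
    rintro u ⟨hu, hu'⟩
    simp only [mem_Icc, not_and_or, not_le] at hu'
    exact hu'.imp (fun h => ⟨hu, h⟩) id
  obtain ⟨c₁, hc₁⟩ := exists_forall_abs_le_of_continuousOn_Icc (B := 1)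
    (hθ'.continuousOn.mono hIcc) fun u hu => by
      rcases hout u hu with h | h
      · simp [hlo h]
      · simp [hhi h]
  obtain ⟨c₂, hc₂⟩ := exists_forall_abs_le_of_continuousOn_Icc (B := 0)
    (continuousOn_id.mul (hθ''.mono hIcc)) fun u hu => by
      rcases hout u hu with h | h
      · simp [hlo' h]
      · simp [hhi' h]
  exact ⟨max c₁ c₂, fun u hu =>
    ⟨(hc₁ u hu).trans (le_max_left _ _), (hc₂ u hu).trans (le_max_right _ _)⟩⟩

theorem stmt8_general (d : ℕ) (ν : ℝ)
    (θ : ℝ → ℝ) (hθC2 : ContDiffOn ℝ 2 θ (Set.Ioi (0 : ℝ)))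
    (hθ1 : ∀ s : ℝ, 0 < s → s < 1 → θ s = s)
    (hθ2 : ∀ s : ℝ, 2 < s → θ s = 2) :
    ∃ C : ℝ, 0 < C ∧ ∀ n : ℕ, 1 ≤ n → ∀ x : EuclideanSpace ℝ (Fin d),
      |lap d (fun y => (n : ℝ) * θ ((1 + ‖y‖ ^ 2) ^ ν / n)) x|
        ≤ C * (1 + ‖x‖ ^ 2) ^ (ν - 1) := by
  obtain ⟨c, hc⟩ := exists_bound_deriv_of_truncation hθC2 hθ1 hθ2
  have hc0 : 0 ≤ c := (abs_nonneg _).trans (hc 1 one_pos).1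
  have hθ' : ContDiffOn ℝ 1 (deriv θ) (Ioi 0) := hθC2.deriv_of_isOpen isOpen_Ioi (by norm_num)
  refine ⟨(2 * d * |ν| + 4 * |ν| * (|ν| + |ν - 1|)) * c + 1, by positivity, fun n hn x => ?_⟩
  have hN : (0 : ℝ) < n := by exact_mod_cast hn
  have hpos : ∀ t : ℝ, 0 ≤ t → 0 < (1 + t) ^ ν / n := fun t ht => by positivity
  rw [lap_comp_norm_sq (g := fun t => (n : ℝ) * θ ((1 + t) ^ ν / n))
    (fun t ht => hasDerivAt_truncProfile hN.ne' (by positivity)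
      ((hθC2.contDiffAt (Ioi_mem_nhds (hpos t ht))).differentiableAt (by norm_num)))
    (fun t ht => hasDerivAt_truncProfile_deriv hN.ne' (by positivity)
      ((hθ'.contDiffAt (Ioi_mem_nhds (hpos t ht))).differentiableAt (by norm_num)))]
  have hx := hpos _ (sq_nonneg ‖x‖)
  calc _ ≤ (2 * d * |ν| + 4 * |ν| * (|ν| + |ν - 1|)) * c * (1 + ‖x‖ ^ 2) ^ (ν - 1) :=
        abs_radial_lap_le (Nat.cast_nonneg d) (sq_nonneg _) (hc _ hx).1 (hc _ hx).2
    _ ≤ _ := by gcongr; linarith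

/-- Let `η(x) = (1+|x|²)^ν`, `0 < ν < α/2`, `1 < α < 2`, `d ≥ 3`, and let
`η_n = θ_n(η)` with `θ_n(s) = n θ(s/n)`, where `θ ∈ C²((0,∞))`, `θ(s) = s` on `(0,1)` and
`θ(s) = 2` on `(2,∞)`.  Then there is a constant `C₀ < ∞`, independent of `n`, with
`|Δ η_n(x)| ≤ C₀ (1+|x|²)^{ν-1}` for all `x`. -/
theorem stmt8 (d : ℕ) (hd : 3 ≤ d) (α ν : ℝ) (hα1 : 1 < α) (hα2 : α < 2)
    (hν1 : 0 < ν) (hν2 : ν < α / 2)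
    (θ : ℝ → ℝ) (hθC2 : ContDiffOn ℝ 2 θ (Set.Ioi (0 : ℝ)))
    (hθ1 : ∀ s : ℝ, 0 < s → s < 1 → θ s = s)
    (hθ2 : ∀ s : ℝ, 2 < s → θ s = 2) :
    ∃ C : ℝ, 0 < C ∧ ∀ n : ℕ, 1 ≤ n → ∀ x : EuclideanSpace ℝ (Fin d),
      |lap d (fun y => (n : ℝ) * θ ((1 + ‖y‖ ^ 2) ^ ν / n)) x|
        ≤ C * (1 + ‖x‖ ^ 2) ^ (ν - 1) :=
  stmt8_general d ν θ hθC2 hθ1 hθ2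
end
end

section
/- Let d ≥ 3, 1 < α < 2, and suppose (1+A)^{-τ}(x,y) ≤ c(|x-y|^{-d+ατ} ∧ |x-y|^{-d-α}) for A = (-Δ)^{α/2}, 0 < τ < 1. Let η(x) = (1+|x|^2)^ν, 0 < ν < α/2. Then the 'far' part S_2(x) := η(x)^{-1} ∫_{B^c(x,1)} |x-y|^{-d-α} η(y)|h(y)| dy satisfies, for p > d/(2ν)+2 and p > d-α+1, the bound ‖S_2‖_∞ ≤ C ‖η^{2/p} h‖_{L^p} for all h ∈ C_c(ℝ^d). -/
open MeasureTheory Module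

/-!
For `‖x - y‖ ≥ 1` Peetre's inequality bounds the weight ratio `η(y) / η(x)` by
`4 ^ ν ‖x - y‖ ^ (2ν)`, and `η ^ (2/p) ≥ 1`, so `S₂(x)` is at most `4 ^ ν` times the integral of
`‖x - y‖ ^ (-(d + α - 2ν)) η(y) ^ (2/p) |h y|` over `‖x - y‖ ≥ 1`. By Hölder's inequality this is
controlled by `‖η ^ (2/p) h‖_p` times the `L^{p'}` norm of the kernel on the exterior of the unit
ball around `x`, which is finite and independent of `x` because `(d + α - 2ν) p' > d`.
-/

lemma measurableSet_one_le_dist {X : Type*} [PseudoMetricSpace X] [MeasurableSpace X]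
    [OpensMeasurableSpace X] (x : X) : MeasurableSet {y | 1 ≤ dist x y} :=
  (isClosed_le continuous_const (continuous_const.dist continuous_id)).measurableSet

lemma one_add_sq_norm_le_of_one_le_norm_sub {E : Type*} [SeminormedAddCommGroup E] {x y : E}
    (hxy : 1 ≤ ‖x - y‖) : 1 + ‖y‖ ^ 2 ≤ 4 * (1 + ‖x‖ ^ 2) * ‖x - y‖ ^ 2 := by
  have hy : ‖y‖ ≤ ‖x‖ + ‖x - y‖ := by simpa using norm_sub_le x (x - y)
  have ht : 1 ≤ ‖x - y‖ ^ 2 := one_le_pow₀ hxy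
  have hy2 : ‖y‖ ^ 2 ≤ 2 * ‖x‖ ^ 2 + 2 * ‖x - y‖ ^ 2 := by
    nlinarith [norm_nonneg y, sq_nonneg (‖x‖ - ‖x - y‖)]
  nlinarith [mul_le_mul_of_nonneg_left ht (sq_nonneg ‖x‖)]

lemma one_add_sq_norm_rpow_neg_mul_rpow_le {E : Type*} [SeminormedAddCommGroup E] {x y : E}
    {ν : ℝ} (hν : 0 ≤ ν) (hxy : 1 ≤ ‖x - y‖) :
    (1 + ‖x‖ ^ 2) ^ (-ν) * (1 + ‖y‖ ^ 2) ^ ν ≤ 4 ^ ν * ‖x - y‖ ^ (2 * ν) := by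
  have hx : 0 < (1 + ‖x‖ ^ 2) ^ ν := by positivity
  rw [Real.rpow_neg (by positivity), inv_mul_le_iff₀ hx]
  calc (1 + ‖y‖ ^ 2) ^ ν ≤ (4 * (1 + ‖x‖ ^ 2) * ‖x - y‖ ^ 2) ^ ν :=
        Real.rpow_le_rpow (by positivity) (one_add_sq_norm_le_of_one_le_norm_sub hxy) hν
    _ = (1 + ‖x‖ ^ 2) ^ ν * (4 ^ ν * ‖x - y‖ ^ (2 * ν)) := by
        rw [Real.mul_rpow (by positivity) (by positivity),
          Real.mul_rpow (by norm_num) (by positivity), Real.rpow_mul (norm_nonneg _), Real.rpow_two]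
        ring

lemma one_add_sq_norm_rpow_neg_mul_kernel_le {E : Type*} [SeminormedAddCommGroup E] {x y : E}
    {ν γ θ a : ℝ} (hν : 0 ≤ ν) (hθ : 0 ≤ θ) (ha : 0 ≤ a) (hxy : 1 ≤ ‖x - y‖) :
    (1 + ‖x‖ ^ 2) ^ (-ν) * (‖x - y‖ ^ γ * ((1 + ‖y‖ ^ 2) ^ ν * a)) ≤
      4 ^ ν * (‖x - y‖ ^ (γ + 2 * ν) * ((1 + ‖y‖ ^ 2) ^ θ * a)) := by
  have hxy0 : 0 < ‖x - y‖ := by linarith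
  calc (1 + ‖x‖ ^ 2) ^ (-ν) * (‖x - y‖ ^ γ * ((1 + ‖y‖ ^ 2) ^ ν * a))
      = ((1 + ‖x‖ ^ 2) ^ (-ν) * (1 + ‖y‖ ^ 2) ^ ν) * (‖x - y‖ ^ γ * a) := by ring
    _ ≤ (4 ^ ν * ‖x - y‖ ^ (2 * ν)) * (‖x - y‖ ^ γ * a) := by
        gcongr ?_ * _
        exact one_add_sq_norm_rpow_neg_mul_rpow_le hν hxy
    _ = 4 ^ ν * (‖x - y‖ ^ (γ + 2 * ν) * (1 * a)) := by
        rw [Real.rpow_add hxy0]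
        ring
    _ ≤ 4 ^ ν * (‖x - y‖ ^ (γ + 2 * ν) * ((1 + ‖y‖ ^ 2) ^ θ * a)) := by
        gcongr
        exact Real.one_le_rpow (by nlinarith [sq_nonneg ‖y‖]) hθ

lemma rpow_neg_le_two_rpow_mul_one_add_rpow_neg {t r : ℝ} (ht : 1 ≤ t) (hr : 0 ≤ r) :
    t ^ (-r) ≤ 2 ^ r * (1 + t) ^ (-r) := by
  have ht0 : 0 < t := by linarith
  calc t ^ (-r) = 2 ^ r * (2 * t) ^ (-r) := by
        rw [Real.mul_rpow (by norm_num) ht0.le, ← mul_assoc, ← Real.rpow_add two_pos]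
        simp
    _ ≤ 2 ^ r * (1 + t) ^ (-r) := by
        gcongr 2 ^ r * ?_
        exact Real.rpow_le_rpow_of_nonpos (by positivity) (by linarith) (neg_nonpos.2 hr)

lemma ae_norm_sub_rpow_neg_le_on_far {E : Type*} [SeminormedAddCommGroup E] [MeasurableSpace E]
    [OpensMeasurableSpace E] {μ : Measure E} (x : E) {r : ℝ} (hr : 0 ≤ r) :
    ∀ᵐ y ∂μ.restrict {y | 1 ≤ dist x y}, ‖x - y‖ ^ (-r) ≤ 2 ^ r * (1 + ‖y - x‖) ^ (-r) := by
  filter_upwards [ae_restrict_mem (measurableSet_one_le_dist x)] with y hy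
  rw [norm_sub_rev]
  exact rpow_neg_le_two_rpow_mul_one_add_rpow_neg (by rwa [← dist_eq_norm']) hr

section FarField

variable {E : Type*} [NormedAddCommGroup E] [NormedSpace ℝ E] [FiniteDimensional ℝ E]
  [MeasurableSpace E] [BorelSpace E] {μ : Measure E} [μ.IsAddHaarMeasure]

lemma integrableOn_norm_sub_rpow_neg_far (x : E) {r : ℝ} (hr : finrank ℝ E < r) :
    IntegrableOn (fun y ↦ ‖x - y‖ ^ (-r)) {y | 1 ≤ dist x y} μ := by
  refine Integrable.mono' ((((integrable_one_add_norm hr).comp_sub_right x).const_mul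
    (2 ^ r)).restrict) (Measurable.aestronglyMeasurable (by fun_prop)) ?_
  filter_upwards [ae_norm_sub_rpow_neg_le_on_far x ((Nat.cast_nonneg _).trans hr.le)] with y hy
  rwa [Real.norm_of_nonneg (by positivity)]

lemma setIntegral_norm_sub_rpow_neg_far_le (x : E) {r : ℝ} (hr : finrank ℝ E < r) :
    ∫ y in {y | 1 ≤ dist x y}, ‖x - y‖ ^ (-r) ∂μ ≤ 2 ^ r * ∫ z, (1 + ‖z‖) ^ (-r) ∂μ := by
  have hint := ((integrable_one_add_norm hr).comp_sub_right x).const_mul (2 ^ r) (μ := μ)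
  calc ∫ y in {y | 1 ≤ dist x y}, ‖x - y‖ ^ (-r) ∂μ
      ≤ ∫ y in {y | 1 ≤ dist x y}, 2 ^ r * (1 + ‖y - x‖) ^ (-r) ∂μ :=
        integral_mono_of_nonneg (.of_forall fun _ ↦ by positivity) hint.restrict
          (ae_norm_sub_rpow_neg_le_on_far x ((Nat.cast_nonneg _).trans hr.le))
    _ ≤ ∫ y, 2 ^ r * (1 + ‖y - x‖) ^ (-r) ∂μ :=
        setIntegral_le_integral hint (.of_forall fun _ ↦ by positivity)
    _ = 2 ^ r * ∫ z, (1 + ‖z‖) ^ (-r) ∂μ := by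
        rw [integral_const_mul, integral_sub_right_eq_self (fun z ↦ (1 + ‖z‖) ^ (-r)) x]

lemma memLp_norm_sub_rpow_neg_far (x : E) {s q : ℝ} (hq : 0 < q) (hsq : finrank ℝ E < s * q) :
    MemLp (fun y ↦ ‖x - y‖ ^ (-s)) (ENNReal.ofReal q) (μ.restrict {y | 1 ≤ dist x y}) := by
  rw [← integrable_norm_rpow_iff (Measurable.aestronglyMeasurable (by fun_prop))
    (by simpa using hq) ENNReal.ofReal_ne_top, ENNReal.toReal_ofReal hq.le]
  have hpow : (fun y ↦ ‖‖x - y‖ ^ (-s)‖ ^ q) = fun y ↦ ‖x - y‖ ^ (-(s * q)) := funext fun y ↦ by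
    rw [Real.norm_of_nonneg (by positivity), ← Real.rpow_mul (norm_nonneg _), neg_mul]
  rw [hpow]
  exact integrableOn_norm_sub_rpow_neg_far x hsq

theorem setIntegral_far_norm_sub_rpow_neg_mul_le (x : E) {p q s : ℝ} (hpq : p.HolderConjugate q)
    (hsq : finrank ℝ E < s * q) {G : E → ℝ} (hG0 : 0 ≤ G) (hG : MemLp G (ENNReal.ofReal p) μ) :
    ∫ y in {y | 1 ≤ dist x y}, ‖x - y‖ ^ (-s) * G y ∂μ ≤
      (2 ^ (s * q) * ∫ z, (1 + ‖z‖) ^ (-(s * q)) ∂μ) ^ (1 / q) * (∫ y, G y ^ p ∂μ) ^ (1 / p) := by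
  have hGp : Integrable (fun y ↦ G y ^ p) μ := by
    simpa [Real.norm_of_nonneg (hG0 _), ENNReal.toReal_ofReal hpq.nonneg] using
      hG.integrable_norm_rpow (by simpa using hpq.pos) ENNReal.ofReal_ne_top
  have hkernel : ∫ y in {y | 1 ≤ dist x y}, (‖x - y‖ ^ (-s)) ^ q ∂μ
      ≤ 2 ^ (s * q) * ∫ z, (1 + ‖z‖) ^ (-(s * q)) ∂μ := by
    simp_rw [← Real.rpow_mul (norm_nonneg _), neg_mul]
    exact setIntegral_norm_sub_rpow_neg_far_le x hsq
  calc ∫ y in {y | 1 ≤ dist x y}, ‖x - y‖ ^ (-s) * G y ∂μ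
      ≤ (∫ y in {y | 1 ≤ dist x y}, (‖x - y‖ ^ (-s)) ^ q ∂μ) ^ (1 / q) *
          (∫ y in {y | 1 ≤ dist x y}, G y ^ p ∂μ) ^ (1 / p) :=
        integral_mul_le_Lp_mul_Lq_of_nonneg hpq.symm (.of_forall fun _ ↦ by positivity)
          (.of_forall hG0) (memLp_norm_sub_rpow_neg_far x hpq.symm.pos hsq) (hG.restrict _)
    _ ≤ _ := by
        have hGp0 : 0 ≤ fun y ↦ G y ^ p := fun y ↦ Real.rpow_nonneg (hG0 y) p
        have hGS := setIntegral_le_integral (s := {y | 1 ≤ dist x y}) hGp (.of_forall hGp0)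
        have hGS0 : 0 ≤ ∫ y in {y | 1 ≤ dist x y}, G y ^ p ∂μ := integral_nonneg hGp0
        have hp0 := hpq.nonneg
        have hq0 := hpq.symm.nonneg
        gcongr

lemma integral_one_add_norm_rpow_neg_pos {r : ℝ} (hr : finrank ℝ E < r) :
    0 < ∫ z, (1 + ‖z‖) ^ (-r) ∂μ := by
  rw [integral_pos_iff_support_of_nonneg (fun _ ↦ by positivity) (integrable_one_add_norm hr)]
  have hsupp : Function.support (fun z : E ↦ (1 + ‖z‖) ^ (-r)) = Set.univ :=
    Function.support_eq_univ fun _ ↦ by positivity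
  simpa [hsupp] using NeZero.ne μ

theorem exists_weighted_setIntegral_far_le {p q γ ν θ : ℝ} (hpq : p.HolderConjugate q)
    (hν : 0 ≤ ν) (hθ : 0 ≤ θ) (hγ : finrank ℝ E < -(γ + 2 * ν) * q) :
    ∃ C : ℝ, 0 < C ∧ ∀ (h : E → ℝ) (x : E),
      MemLp (fun y ↦ (1 + ‖y‖ ^ 2) ^ θ * |h y|) (ENNReal.ofReal p) μ →
        (1 + ‖x‖ ^ 2) ^ (-ν) *
            ∫ y in {y | 1 ≤ dist x y}, ‖x - y‖ ^ γ * ((1 + ‖y‖ ^ 2) ^ ν * |h y|) ∂μ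
          ≤ C * (∫ y, ((1 + ‖y‖ ^ 2) ^ θ * |h y|) ^ p ∂μ) ^ (1 / p) := by
  set s := -(γ + 2 * ν)
  refine ⟨4 ^ ν * (2 ^ (s * q) * ∫ z, (1 + ‖z‖) ^ (-(s * q)) ∂μ) ^ (1 / q),
    by have := integral_one_add_norm_rpow_neg_pos (μ := μ) hγ; positivity, fun h x hG ↦ ?_⟩
  have := hpq.symm.ennrealOfReal
  have hint := ((memLp_norm_sub_rpow_neg_far x hpq.symm.pos hγ).integrable_mul
    (hG.restrict _)).const_mul (4 ^ ν)
  calc (1 + ‖x‖ ^ 2) ^ (-ν) *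
        ∫ y in {y | 1 ≤ dist x y}, ‖x - y‖ ^ γ * ((1 + ‖y‖ ^ 2) ^ ν * |h y|) ∂μ
      = ∫ y in {y | 1 ≤ dist x y},
          (1 + ‖x‖ ^ 2) ^ (-ν) * (‖x - y‖ ^ γ * ((1 + ‖y‖ ^ 2) ^ ν * |h y|)) ∂μ :=
        (integral_const_mul _ _).symm
    _ ≤ ∫ y in {y | 1 ≤ dist x y}, 4 ^ ν * (‖x - y‖ ^ (-s) * ((1 + ‖y‖ ^ 2) ^ θ * |h y|)) ∂μ := by
        refine integral_mono_of_nonneg (.of_forall fun _ ↦ by positivity) hint ?_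
        filter_upwards [ae_restrict_mem (measurableSet_one_le_dist x)] with y hy
        rw [neg_neg]
        exact one_add_sq_norm_rpow_neg_mul_kernel_le hν hθ (abs_nonneg _)
          (by rwa [← dist_eq_norm])
    _ = 4 ^ ν * ∫ y in {y | 1 ≤ dist x y}, ‖x - y‖ ^ (-s) * ((1 + ‖y‖ ^ 2) ^ θ * |h y|) ∂μ :=
        integral_const_mul _ _
    _ ≤ _ := by
        rw [mul_assoc]
        gcongr
        exact setIntegral_far_norm_sub_rpow_neg_mul_le x hpq hγ (fun _ ↦ by positivity) hG

end FarField

theorem stmt17_general (d : ℕ) (α ν p : ℝ)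
    (hν1 : 0 < ν) (hν2 : ν < α / 2)
    (hp1 : (d : ℝ) / (2 * ν) + 2 < p) :
    ∃ C : ℝ, 0 < C ∧ ∀ h : EuclideanSpace ℝ (Fin d) → ℝ,
      Continuous h → HasCompactSupport h → ∀ x : EuclideanSpace ℝ (Fin d),
        (1 + ‖x‖ ^ 2) ^ (-ν) *
            ∫ y in {y : EuclideanSpace ℝ (Fin d) | 1 ≤ dist x y},
              ‖x - y‖ ^ (-(d : ℝ) - α) * ((1 + ‖y‖ ^ 2) ^ ν * |h y|)
          ≤ C * (∫ y, ((1 + ‖y‖ ^ 2) ^ (ν * (2 / p)) * |h y|) ^ p) ^ (1 / p) := by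
  have hp : 1 < p := by linarith [div_nonneg d.cast_nonneg (by linarith : 0 ≤ 2 * ν)]
  have hpq : p.HolderConjugate p.conjExponent := .conjExponent hp
  have hθ : 0 ≤ ν * (2 / p) := by positivity
  obtain ⟨C, hC, hbound⟩ := exists_weighted_setIntegral_far_le (μ := volume)
    (γ := -(d : ℝ) - α) hpq hν1.le hθ (by
      rw [finrank_euclideanSpace_fin]
      nlinarith [hpq.symm.lt, d.cast_nonneg (α := ℝ)])
  refine ⟨C, hC, fun h hcont hsupp x ↦ hbound h x ?_⟩
  refine Continuous.memLp_of_hasCompactSupport ?_ hsupp.abs.mul_left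
  exact ((continuous_const.add (continuous_norm.pow 2)).rpow_const fun _ ↦ .inr hθ).mul hcont.abs

/-- Let `d ≥ 3`, `1 < α < 2`, `A = (-Δ)^{α/2}` with kernel bound
`(1+A)^{-τ}(x,y) ≤ c(|x-y|^{-d+ατ} ∧ |x-y|^{-d-α})`, `0 < τ < 1`, and `η(x) = (1+|x|²)^ν`,
`0 < ν < α/2`.  Then for `p > d/(2ν)+2` and `p > d-α+1` the 'far' part
`S₂(x) = η(x)^{-1} ∫_{B^c(x,1)} |x-y|^{-d-α} η(y)|h(y)| dy` satisfies
`‖S₂‖_∞ ≤ C ‖η^{2/p} h‖_{L^p}` for all `h ∈ C_c(ℝ^d)`. -/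
theorem stmt17 (d : ℕ) (hd : 3 ≤ d) (α ν p τ : ℝ)
    (hα1 : 1 < α) (hα2 : α < 2) (hν1 : 0 < ν) (hν2 : ν < α / 2)
    (hτ1 : 0 < τ) (hτ2 : τ < 1)
    (hp1 : (d : ℝ) / (2 * ν) + 2 < p) (hp2 : (d : ℝ) - α + 1 < p)
    (c : ℝ) (hc : 0 < c)
    (k : EuclideanSpace ℝ (Fin d) → EuclideanSpace ℝ (Fin d) → ℝ)
    (hk : ∀ x y : EuclideanSpace ℝ (Fin d), x ≠ y →
      k x y ≤ c * min (‖x - y‖ ^ (-(d : ℝ) + α * τ)) (‖x - y‖ ^ (-(d : ℝ) - α))) :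
    ∃ C : ℝ, 0 < C ∧ ∀ h : EuclideanSpace ℝ (Fin d) → ℝ,
      Continuous h → HasCompactSupport h → ∀ x : EuclideanSpace ℝ (Fin d),
        (1 + ‖x‖ ^ 2) ^ (-ν) *
            ∫ y in {y : EuclideanSpace ℝ (Fin d) | 1 ≤ dist x y},
              ‖x - y‖ ^ (-(d : ℝ) - α) * ((1 + ‖y‖ ^ 2) ^ ν * |h y|)
          ≤ C * (∫ y, ((1 + ‖y‖ ^ 2) ^ (ν * (2 / p)) * |h y|) ^ p) ^ (1 / p) :=
  stmt17_general d α ν p hν1 hν2 hp1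
end
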